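/- Let G be a space-time network over terminals K in which, for each terminal k, ground arcs connect consecutive ground nodes at k forward in time with zero cost and unbounded capacity. Suppose light travel arcs between terminals k and k' all have identical cost parameters regardless of departure time. Then for any feasible solution using a light travel arc from an arrival-ground node n at k to a ground-departure node m at k' that is not the earliest ground-departure node at k' reachable from n, there exists a feasible solution of no greater cost that instead routes the same flow to the earliest reachable ground-departure node at k' and then forward along ground arcs to m. -/

import Mathlib

/-!
A ground path from the earliest reachable node `head a'` to `head a` is a unit flow `d` on ground
arcs. Moving the flow of `a` onto `a'` and then along `d` keeps flow conservation, since both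
routes leave the same node and end at `head a`; it keeps capacities, since `a'` and the ground arcs
are uncapacitated; and it does not increase the cost, since ground arcs are free, `a` and `a'`
have the same cost parameters, and `y ↦ e ⌈y / ρ⌉ + g y` is subadditive for `e ≥ 0`.
-/

open Finset

section NetOutflow

variable {V A : Type*} [Fintype A] [DecidableEq V] (tail head : A → V)

def netOutflow : (A → ℕ) →+ (V → ℤ) where
  toFun x n :=
    ∑ l ∈ univ.filter (tail · = n), (x l : ℤ) - ∑ l ∈ univ.filter (head · = n), (x l : ℤ)
  map_zero' := by ext; simp
  map_add' x y := by
    ext; simp only [Pi.add_apply, Nat.cast_add, sum_add_distrib]; ring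

lemma netOutflow_eq_zero_iff (x : A → ℕ) :
    netOutflow tail head x = 0 ↔ ∀ n, ∑ l ∈ univ.filter (head · = n), x l
      = ∑ l ∈ univ.filter (tail · = n), x l := by
  simp only [funext_iff, netOutflow, AddMonoidHom.coe_mk, ZeroHom.coe_mk, Pi.zero_apply,
    sub_eq_zero, eq_comm (a := ∑ l ∈ univ.filter (head · = _), x l)]
  exact forall_congr' fun n => by exact_mod_cast Iff.rfl

lemma netOutflow_single [DecidableEq A] (l : A) :
    netOutflow tail head (Pi.single l 1) = Pi.single (tail l) 1 - Pi.single (head l) 1 := by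
  ext n
  simp [netOutflow, Pi.single_apply, eq_comm]

lemma exists_netOutflow_eq_of_reflTransGen [DecidableEq A] (P : A → Prop) {u v : V}
    (h : Relation.ReflTransGen (fun u v => ∃ l, P l ∧ tail l = u ∧ head l = v) u v) :
    ∃ d : A → ℕ, (∀ l, ¬ P l → d l = 0) ∧
      netOutflow tail head d = Pi.single u 1 - Pi.single v 1 := by
  induction h using Relation.ReflTransGen.head_induction_on with
  | refl => exact ⟨0, fun _ _ => rfl, by simp⟩
  | head step _ ih =>
    obtain ⟨l, hl, rfl, rfl⟩ := step
    obtain ⟨d, hd, hdiv⟩ := ih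
    refine ⟨d + Pi.single l 1, fun l' hl' => ?_, ?_⟩
    · have : l' ≠ l := by rintro rfl; exact hl' hl
      simp [hd l' hl', this]
    · rw [map_add, hdiv, netOutflow_single]
      abel

end NetOutflow

section Reroute

variable {A : Type*} [DecidableEq A] (x d : A → ℕ) {a a' : A}

/-- The flow on `a` is moved onto `a'` and then along `d`. -/
def reroute (a a' : A) : A → ℕ :=
  Function.update (x + x a • (Pi.single a' 1 + d)) a 0

@[simp] lemma reroute_self : reroute x d a a' a = 0 := by simp [reroute]

lemma reroute_of_ne {l : A} (h : l ≠ a) (h' : l ≠ a') :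
    reroute x d a a' l = x l + x a * d l := by
  simp [reroute, h, h']

lemma reroute_right (hne : a ≠ a') (hd : d a' = 0) : reroute x d a a' a' = x a' + x a := by
  simp [reroute, hne.symm, hd]

lemma reroute_add_single (hne : a ≠ a') (hd : d a = 0) :
    reroute x d a a' + x a • Pi.single a 1 = x + x a • (Pi.single a' 1 + d) := by
  ext l
  by_cases h : l = a
  · subst h; simp [reroute, hne, hd]
  · simp [reroute, h]

lemma netOutflow_reroute {V : Type*} [Fintype A] [DecidableEq V] (tail head : A → V)
    (hx : netOutflow tail head x = 0) (hne : a ≠ a') (hda : d a = 0)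
    (htail : tail a' = tail a)
    (hd : netOutflow tail head d = Pi.single (head a') 1 - Pi.single (head a) 1) :
    netOutflow tail head (reroute x d a a') = 0 := by
  have h := congrArg (netOutflow tail head) (reroute_add_single x d hne hda)
  rw [map_add, map_add, map_nsmul, map_nsmul, map_add, hx, hd, netOutflow_single,
    netOutflow_single, htail, sub_add_sub_cancel, zero_add] at h
  exact add_eq_right.mp h

end Reroute

lemma ceil_cost_add_le {K : Type*} [Field K] [LinearOrder K] [IsStrictOrderedRing K]
    [FloorRing K] {e : K} (he : 0 ≤ e) (g ρ y z : K) :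
    e * ⌈(y + z) / ρ⌉ + g * (y + z) ≤ e * ⌈y / ρ⌉ + g * y + (e * ⌈z / ρ⌉ + g * z) := by
  have h : (⌈(y + z) / ρ⌉ : K) ≤ ⌈y / ρ⌉ + ⌈z / ρ⌉ := by
    rw [add_div]; exact_mod_cast Int.ceil_add_le _ _
  linarith [mul_le_mul_of_nonneg_left h he]

lemma Fintype.sum_le_sum_of_pair_le {A M : Type*} [Fintype A] [DecidableEq A]
    [AddCommMonoid M] [PartialOrder M] [IsOrderedAddMonoid M] {f f' : A → M} {a a' : A}
    (hne : a ≠ a') (hpair : f' a + f' a' ≤ f a + f a')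
    (hrest : ∀ l, l ≠ a → l ≠ a' → f' l = f l) :
    ∑ l, f' l ≤ ∑ l, f l := by
  have hsplit (h : A → M) : ∑ l, h l = ∑ l ∈ univ \ {a, a'}, h l + (h a + h a') := by
    rw [← sum_pair hne, sum_sdiff (subset_univ _)]
  rw [hsplit f, hsplit f']
  refine add_le_add (Finset.sum_congr rfl fun l hl => ?_).le hpair
  simp only [mem_sdiff, mem_univ, mem_insert, mem_singleton, not_or, true_and] at hl
  exact hrest l hl.1 hl.2

theorem earliest_reachability_reduction_general
    {V A : Type*} [Fintype A] [DecidableEq V]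
    (tail head : A → V) (isGround : A → Prop) [DecidablePred isGround]
    (cap : A → ℕ∞)
    (e g : A → ℚ) (ρ : ℕ)
    (he : ∀ l, 0 ≤ e l)
    (cost : (A → ℕ) → ℚ)
    (hcost : ∀ x, cost x
      = ∑ l, if isGround l then 0 else e l * ⌈(x l : ℚ) / ρ⌉ + g l * x l)
    (Feasible : (A → ℕ) → Prop)
    (hFeas : ∀ x, Feasible x ↔
      ((∀ n : V, ∑ l ∈ Finset.univ.filter (fun l => head l = n), x l
            = ∑ l ∈ Finset.univ.filter (fun l => tail l = n), x l)
        ∧ ∀ l, (x l : ℕ∞) ≤ cap l))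
    (hgroundcap : ∀ l, isGround l → cap l = ⊤)
    (a a' : A) (hne : a ≠ a')
    (hlight : ¬ isGround a) (hlight' : ¬ isGround a')
    (hsametail : tail a' = tail a)
    (hcap' : cap a' = ⊤)
    (hecost : e a' = e a) (hgcost : g a' = g a)
    (hreach : Relation.ReflTransGen
      (fun u v => ∃ l, isGround l ∧ tail l = u ∧ head l = v) (head a') (head a)) :
    ∀ x, Feasible x →
      ∃ x', Feasible x' ∧ cost x' ≤ cost x ∧
        x' a = 0 ∧ x' a' = x a' + x a ∧
        ∀ l, ¬ isGround l → l ≠ a → l ≠ a' → x' l = x l := by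
  classical
  intro x hx
  obtain ⟨hcons, hcap⟩ := (hFeas x).1 hx
  obtain ⟨d, hd, hdiv⟩ := exists_netOutflow_eq_of_reflTransGen tail head isGround hreach
  have hrest : ∀ l, ¬ isGround l → l ≠ a → l ≠ a' → reroute x d a a' l = x l :=
    fun l hl h h' => by rw [reroute_of_ne x d h h', hd l hl, mul_zero, add_zero]
  have hright := reroute_right x d hne (hd a' hlight')
  refine ⟨reroute x d a a', (hFeas _).2 ⟨?_, fun l => ?_⟩, ?_, reroute_self x d, hright,
    hrest⟩
  · rw [← netOutflow_eq_zero_iff] at hcons ⊢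
    exact netOutflow_reroute x d tail head hcons hne (hd a hlight) hsametail hdiv
  · by_cases hl : isGround l
    · simp [hgroundcap l hl]
    obtain rfl | h := eq_or_ne l a
    · simp
    obtain rfl | h' := eq_or_ne l a'
    · simp [hcap']
    · rw [hrest l hl h h']; exact hcap l
  · rw [hcost, hcost]
    refine Fintype.sum_le_sum_of_pair_le hne ?_ fun l h h' => ?_
    · simp only [if_neg hlight, if_neg hlight', reroute_self, hright, hecost, hgcost,
        Nat.cast_zero, zero_div, Int.ceil_zero, Int.cast_zero, mul_zero, add_zero, zero_add,
        Nat.cast_add]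
      rw [add_comm (_ + _)]
      exact ceil_cost_add_le (he a) _ _ _ _
    · by_cases hl : isGround l
      · simp [hl]
      · simp [hl, hrest l hl h h']

/-- **Earliest-reachability reduction.** In a space-time network where ground arcs
idle locomotives forward in time at zero cost and unbounded capacity, and light
travel arcs between a fixed terminal pair share identical cost parameters
`(e, g)` regardless of departure time, consider a light travel arc `a` from an
arrival-ground node to a ground-departure node `m`, and the light travel arc `a'`
from the same arrival-ground node to the earliest reachable ground-departure node
`m'` at the same destination terminal, from which `m` can be reached by idling
forward along ground arcs. Then every feasible solution (flow conservation plus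
capacity bounds) using `a` can be replaced by a feasible solution of no greater
cost that routes the same flow over `a'` and then forward along ground arcs,
leaving all other non-ground arcs unchanged. -/
theorem earliest_reachability_reduction
    {V A : Type*} [Fintype V] [Fintype A] [DecidableEq V] [DecidableEq A]
    (tail head : A → V) (isGround : A → Prop) [DecidablePred isGround]
    (cap : A → ℕ∞)
    (e g : A → ℚ) (ρ : ℕ) (hρ : 0 < ρ)
    (he : ∀ l, 0 ≤ e l) (hg : ∀ l, 0 ≤ g l)
    (cost : (A → ℕ) → ℚ)
    (hcost : ∀ x, cost x
      = ∑ l, if isGround l then 0 else e l * ⌈(x l : ℚ) / ρ⌉ + g l * x l)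
    (Feasible : (A → ℕ) → Prop)
    (hFeas : ∀ x, Feasible x ↔
      ((∀ n : V, ∑ l ∈ Finset.univ.filter (fun l => head l = n), x l
            = ∑ l ∈ Finset.univ.filter (fun l => tail l = n), x l)
        ∧ ∀ l, (x l : ℕ∞) ≤ cap l))
    (hgroundcap : ∀ l, isGround l → cap l = ⊤)
    (a a' : A) (hne : a ≠ a')
    (hlight : ¬ isGround a) (hlight' : ¬ isGround a')
    (hsametail : tail a' = tail a)
    (hcap' : cap a' = ⊤)
    (hecost : e a' = e a) (hgcost : g a' = g a)
    (hreach : Relation.ReflTransGen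
      (fun u v => ∃ l, isGround l ∧ tail l = u ∧ head l = v) (head a') (head a)) :
    ∀ x, Feasible x →
      ∃ x', Feasible x' ∧ cost x' ≤ cost x ∧
        x' a = 0 ∧ x' a' = x a' + x a ∧
        ∀ l, ¬ isGround l → l ≠ a → l ≠ a' → x' l = x l :=
  earliest_reachability_reduction_general tail head isGround cap e g ρ he cost hcost Feasible hFeas
    hgroundcap a a' hne hlight hlight' hsametail hcap' hecost hgcost hreach
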